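/- If an implementation DFSM S passes a test suite TS containing V.⋃_{i=0}^{m−n+1} Σ_I^i under the equality pass criterion against M, and for every pair of state-cover traces α, β ∈ V reaching distinct states of the prime reference machine M there is a distinguishing trace γ with α.γ, β.γ ∈ TS, then V.⋃_{i=0}^{m−n} Σ_I^i reaches all states of S, provided S is minimal with at most m states. -/

import Mathlib

def dAfter {Q I : Type*} (δ : Q → I → Q) : Q → List I → Q
  | q, [] => q
  | q, x :: xs => dAfter δ (δ q x) xs

def oOut {Q I O : Type*} (δ : Q → I → Q) (ω : Q → I → O) : Q → List I → List O
  | _, [] => []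
  | q, x :: xs => ω q x :: oOut δ ω (δ q x) xs

/-!
The states of `S` reached by `V` already number at least `n`: two cover traces leading to distinct
states of `M` are told apart by a trace `γ` whose extensions are in `TS`, and since `S` answers
like `M` on `TS` it tells them apart too. Extending the traces of `V` by one more input either
reaches a new state of `S` or reaches nothing new, and in the latter case everything reachable is
already reached. As `S` has at most `m` states, `m - n` extensions suffice.
-/

section Traces

variable {Q I O : Type*}

theorem dAfter_append (δ : Q → I → Q) (q : Q) (xs ys : List I) :
    dAfter δ q (xs ++ ys) = dAfter δ (dAfter δ q xs) ys := by
  induction xs generalizing q with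
  | nil => rfl
  | cons a t ih => simp [dAfter, ih]

theorem oOut_append (δ : Q → I → Q) (ω : Q → I → O) (q : Q) (xs ys : List I) :
    oOut δ ω q (xs ++ ys) = oOut δ ω q xs ++ oOut δ ω (dAfter δ q xs) ys := by
  induction xs generalizing q with
  | nil => rfl
  | cons a t ih => simp [oOut, dAfter, ih]

theorem length_oOut (δ : Q → I → Q) (ω : Q → I → O) (q : Q) (xs : List I) :
    (oOut δ ω q xs).length = xs.length := by
  induction xs generalizing q with
  | nil => rfl
  | cons a t ih => simp [oOut, ih]

theorem oOut_dAfter_eq_drop (δ : Q → I → Q) (ω : Q → I → O) (q : Q) (xs ys : List I) :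
    oOut δ ω (dAfter δ q xs) ys = (oOut δ ω q (xs ++ ys)).drop xs.length := by
  rw [oOut_append, List.drop_left' (length_oOut δ ω q xs)]

end Traces

section Reach

variable {S I : Type*} (δ : S → I → S) (s0 : S) (V : Set (List I))

/-- The states reached by `V.⋃_{i=0}^{k} Σ_I^i`. -/
def reachWithin (k : ℕ) : Set S :=
  {s | ∃ v ∈ V, ∃ w : List I, w.length ≤ k ∧ dAfter δ s0 (v ++ w) = s}

variable {δ s0 V}

theorem reachWithin_mono {k j : ℕ} (hkj : k ≤ j) :
    reachWithin δ s0 V k ⊆ reachWithin δ s0 V j := by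
  rintro s ⟨v, hv, w, hw, rfl⟩
  exact ⟨v, hv, w, hw.trans hkj, rfl⟩

theorem dAfter_mem_reachWithin_of_succ_subset (hε : [] ∈ V) {k : ℕ}
    (hk : reachWithin δ s0 V (k + 1) ⊆ reachWithin δ s0 V k) (π : List I) :
    dAfter δ s0 π ∈ reachWithin δ s0 V k := by
  induction π using List.reverseRecOn with
  | nil => exact ⟨[], hε, [], Nat.zero_le _, rfl⟩
  | append_singleton xs x ih =>
    obtain ⟨v, hv, w, hw, he⟩ := ih
    apply hk
    refine ⟨v, hv, w ++ [x], by simpa using hw, ?_⟩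
    rw [← List.append_assoc, dAfter_append, he, ← dAfter_append]

theorem reachWithin_eq_univ_or_card_le (hε : [] ∈ V)
    (hreach : ∀ s : S, ∃ π : List I, dAfter δ s0 π = s) [Finite S] (k : ℕ) :
    reachWithin δ s0 V k = Set.univ ∨
      (reachWithin δ s0 V 0).ncard + k ≤ (reachWithin δ s0 V k).ncard := by
  induction k with
  | zero => exact Or.inr le_rfl
  | succ k ih =>
    have hsub := reachWithin_mono (δ := δ) (s0 := s0) (V := V) (by omega : k ≤ k + 1)
    by_cases hstuck : reachWithin δ s0 V (k + 1) ⊆ reachWithin δ s0 V k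
    · left
      refine Set.eq_univ_of_forall fun s => ?_
      obtain ⟨π, rfl⟩ := hreach s
      exact hsub (dAfter_mem_reachWithin_of_succ_subset hε hstuck π)
    · rcases ih with huniv | hcard
      · exact absurd (huniv ▸ Set.subset_univ _) hstuck
      · have := Set.ncard_lt_ncard ⟨hsub, hstuck⟩ (Set.toFinite _)
        exact Or.inr (by omega)

theorem reachWithin_eq_univ (hε : [] ∈ V)
    (hreach : ∀ s : S, ∃ π : List I, dAfter δ s0 π = s) [Finite S] {k : ℕ}
    (hk : Nat.card S ≤ (reachWithin δ s0 V 0).ncard + k) :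
    reachWithin δ s0 V k = Set.univ := by
  refine (reachWithin_eq_univ_or_card_le hε hreach k).elim id fun hcard => ?_
  refine Set.eq_of_subset_of_ncard_le (Set.subset_univ _) ?_ (Set.toFinite _)
  rw [Set.ncard_univ]
  omega

end Reach

section Passing

variable {Q S I O : Type*} {δM : Q → I → Q} {ωM : Q → I → O} {q0 : Q}
  {δS : S → I → S} {ωS : S → I → O} {s0 : S} {TS : Set (List I)}

theorem oOut_dAfter_eq_of_append_mem (hpass : ∀ xs ∈ TS, oOut δS ωS s0 xs = oOut δM ωM q0 xs)
    {v γ : List I} (h : v ++ γ ∈ TS) :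
    oOut δS ωS (dAfter δS s0 v) γ = oOut δM ωM (dAfter δM q0 v) γ := by
  rw [oOut_dAfter_eq_drop, oOut_dAfter_eq_drop, hpass _ h]

theorem dAfter_ne_of_distinguishing (hpass : ∀ xs ∈ TS, oOut δS ωS s0 xs = oOut δM ωM q0 xs)
    {α β γ : List I} (hγ : oOut δM ωM (dAfter δM q0 α) γ ≠ oOut δM ωM (dAfter δM q0 β) γ)
    (hα : α ++ γ ∈ TS) (hβ : β ++ γ ∈ TS) :
    dAfter δS s0 α ≠ dAfter δS s0 β := fun h => hγ <| by
  rw [← oOut_dAfter_eq_of_append_mem hpass hα, ← oOut_dAfter_eq_of_append_mem hpass hβ, h]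

theorem card_le_ncard_reachWithin_zero [Finite S] {V : Set (List I)}
    (hcover : ∀ q : Q, ∃ v ∈ V, dAfter δM q0 v = q)
    (hTS2 : ∀ α ∈ V, ∀ β ∈ V, dAfter δM q0 α ≠ dAfter δM q0 β →
      ∃ γ : List I, oOut δM ωM (dAfter δM q0 α) γ ≠ oOut δM ωM (dAfter δM q0 β) γ ∧
        α ++ γ ∈ TS ∧ β ++ γ ∈ TS)
    (hpass : ∀ xs ∈ TS, oOut δS ωS s0 xs = oOut δM ωM q0 xs) :
    Nat.card Q ≤ (reachWithin δS s0 V 0).ncard := by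
  choose f hfV hfM using hcover
  let g : Q → reachWithin δS s0 V 0 := fun q =>
    ⟨dAfter δS s0 (f q), f q, hfV q, [], le_rfl, by rw [List.append_nil]⟩
  have hg : Function.Injective g := by
    intro q q' h
    by_contra hne
    obtain ⟨γ, hγ, hα, hβ⟩ := hTS2 _ (hfV q) _ (hfV q') (by rwa [hfM, hfM])
    exact dAfter_ne_of_distinguishing hpass hγ hα hβ (congrArg Subtype.val h)
  exact (Nat.card_le_card_of_injective g hg).trans_eq (Nat.card_coe_set_eq _)

end Passing

theorem stmt_16_general {Q S I O : Type*} [Fintype Q] [Fintype S]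
    (δM : Q → I → Q) (ωM : Q → I → O) (q0 : Q)
    (m : ℕ)
    -- S minimal with at most m states
    (δS : S → I → S) (ωS : S → I → O) (s0 : S)
    (hSreach : ∀ s : S, ∃ π : List I, dAfter δS s0 π = s)
    (hScard : Fintype.card S ≤ m)
    -- state cover V of M containing the empty trace
    (V : Set (List I)) (hε : ([] : List I) ∈ V)
    (hcover : ∀ q : Q, ∃ v ∈ V, dAfter δM q0 v = q)
    (TS : Set (List I))
    (hTS2 : ∀ α ∈ V, ∀ β ∈ V, dAfter δM q0 α ≠ dAfter δM q0 β →
      ∃ γ : List I, oOut δM ωM (dAfter δM q0 α) γ ≠ oOut δM ωM (dAfter δM q0 β) γ ∧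
        α ++ γ ∈ TS ∧ β ++ γ ∈ TS)
    (hpass : ∀ xs ∈ TS, oOut δS ωS s0 xs = oOut δM ωM q0 xs) :
    ∀ s : S, ∃ v ∈ V, ∃ w : List I,
      w.length ≤ m - Fintype.card Q ∧ dAfter δS s0 (v ++ w) = s := by
  intro s
  have hV := card_le_ncard_reachWithin_zero hcover hTS2 hpass
  rw [Nat.card_eq_fintype_card] at hV
  have huniv : reachWithin δS s0 V (m - Fintype.card Q) = Set.univ :=
    reachWithin_eq_univ hε hSreach (by rw [Nat.card_eq_fintype_card]; omega)
  exact (huniv ▸ Set.mem_univ s : s ∈ reachWithin δS s0 V (m - Fintype.card Q))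

/-- if (minimal, at most m states) S passes a test suite TS containing
V.⋃_{i=0..m-n+1} Σ_I^i under the equality pass criterion, and for every pair of state-cover
traces reaching distinct states of (prime) M there is a distinguishing trace whose
extensions are in TS, then V.⋃_{i=0..m-n} Σ_I^i reaches all states of S. -/
theorem stmt_16 {Q S I O : Type*} [Fintype Q] [Fintype S]
    (δM : Q → I → Q) (ωM : Q → I → O) (q0 : Q)
    -- M prime with n = Fintype.card Q states
    (hMreach : ∀ q : Q, ∃ π : List I, dAfter δM q0 π = q)
    (hMdist : ∀ q q' : Q, (∀ xs : List I, oOut δM ωM q xs = oOut δM ωM q' xs) → q = q')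
    (m : ℕ) (hmn : Fintype.card Q ≤ m)
    -- S minimal with at most m states
    (δS : S → I → S) (ωS : S → I → O) (s0 : S)
    (hSreach : ∀ s : S, ∃ π : List I, dAfter δS s0 π = s)
    (hSdist : ∀ s s' : S, (∀ xs : List I, oOut δS ωS s xs = oOut δS ωS s' xs) → s = s')
    (hScard : Fintype.card S ≤ m)
    -- state cover V of M containing the empty trace
    (V : Set (List I)) (hε : ([] : List I) ∈ V)
    (hcover : ∀ q : Q, ∃ v ∈ V, dAfter δM q0 v = q)
    (TS : Set (List I))
    (hTS1 : ∀ v ∈ V, ∀ w : List I,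
      w.length ≤ m - Fintype.card Q + 1 → v ++ w ∈ TS)
    (hTS2 : ∀ α ∈ V, ∀ β ∈ V, dAfter δM q0 α ≠ dAfter δM q0 β →
      ∃ γ : List I, oOut δM ωM (dAfter δM q0 α) γ ≠ oOut δM ωM (dAfter δM q0 β) γ ∧
        α ++ γ ∈ TS ∧ β ++ γ ∈ TS)
    (hpass : ∀ xs ∈ TS, oOut δS ωS s0 xs = oOut δM ωM q0 xs) :
    ∀ s : S, ∃ v ∈ V, ∃ w : List I,
      w.length ≤ m - Fintype.card Q ∧ dAfter δS s0 (v ++ w) = s :=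
  stmt_16_general δM ωM q0 m δS ωS s0 hSreach hScard V hε hcover TS hTS2 hpass
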